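/- arXiv:1311.1581 — 9 statements merged into one kernel-verified Lean document; each statement's English description precedes it below -/
import Mathlib

section
/- For every α ≥ 0 and every n, if A = uuᵀ and B = vvᵀ with u,v ∈ [0,∞)ⁿ and A - B positive semidefinite, then the matrix with entries A_{ij}^α - B_{ij}^α is positive semidefinite. -/
/-!
Since `uuᵀ - vvᵀ ≥ 0`, every `x` orthogonal to `u` is orthogonal to `v`, so `v = c • u`, and
testing against `x = u` gives `|c| ≤ 1`; by nonnegativity we may take `c ≥ 0`. Writing
`w = u^{∘α}`, both entrywise powers are rank one: `A^{∘α} = wwᵀ` and `B^{∘α} = c^{2α} wwᵀ`, so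
their difference is `(1 - c^{2α}) wwᵀ ≥ 0`.
-/

open Matrix

theorem exists_eq_smul_of_inner_sq_le {E : Type*} [NormedAddCommGroup E] [InnerProductSpace ℝ E]
    {u v : E} (h : ∀ x, inner ℝ v x ^ 2 ≤ inner ℝ u x ^ 2) : ∃ c : ℝ, |c| ≤ 1 ∧ v = c • u := by
  have hv : v ∈ ℝ ∙ u := by
    rw [← Submodule.orthogonal_orthogonal (ℝ ∙ u), Submodule.mem_orthogonal']
    intro x hx
    rw [Submodule.mem_orthogonal_singleton_iff_inner_right] at hx
    simpa [hx] using h x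
  obtain ⟨c, rfl⟩ := Submodule.mem_span_singleton.mp hv
  rcases eq_or_ne u 0 with rfl | hu
  · exact ⟨0, by simp⟩
  refine ⟨c, ?_, rfl⟩
  have hcu := h u
  rw [inner_smul_left, real_inner_self_eq_norm_sq, conj_trivial, mul_pow] at hcu
  rw [← sq_le_one_iff_abs_le_one]
  exact le_of_mul_le_mul_right (by simpa using hcu) (by positivity)

theorem Matrix.exists_eq_smul_of_posSemidef_vecMulVec_sub {n : Type*} [Fintype n] {u v : n → ℝ}
    (h : (vecMulVec u u - vecMulVec v v).PosSemidef) : ∃ c : ℝ, |c| ≤ 1 ∧ v = c • u := by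
  obtain ⟨c, hc, hvc⟩ := exists_eq_smul_of_inner_sq_le (u := WithLp.toLp 2 u)
    (v := WithLp.toLp 2 v) fun x => by
      have hx := h.dotProduct_mulVec_nonneg x.ofLp
      simp [sub_mulVec, vecMulVec_mulVec, dotProduct_comm _ x.ofLp] at hx
      simpa [EuclideanSpace.inner_eq_star_dotProduct, sq] using hx
  exact ⟨c, hc, by simpa using congrArg WithLp.ofLp hvc⟩

theorem eq_abs_smul_of_eq_smul {ι R : Type*} [Ring R] [LinearOrder R] [IsStrictOrderedRing R]
    {u v : ι → R} {c : R} (hu : ∀ i, 0 ≤ u i) (hv : ∀ i, 0 ≤ v i) (h : v = c • u) :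
    v = |c| • u := by
  ext i
  simpa [abs_of_nonneg (hv i), abs_mul, abs_of_nonneg (hu i)] using congrArg abs (congrFun h i)

/-- `x ^ α` with the convention `0 ^ α = 0`; `Real.rpow` has `0 ^ 0 = 1`. -/
noncomputable def rpow₀ (x α : ℝ) : ℝ := if x = 0 then 0 else x ^ α

theorem rpow₀_mul {x y : ℝ} (hx : 0 ≤ x) (hy : 0 ≤ y) (α : ℝ) :
    rpow₀ (x * y) α = rpow₀ x α * rpow₀ y α := by
  unfold rpow₀
  by_cases hx0 : x = 0
  · simp [hx0]
  by_cases hy0 : y = 0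
  · simp [hy0]
  simp [hx0, hy0, Real.mul_rpow hx hy]

theorem rpow₀_sq_le_one {x α : ℝ} (hx0 : 0 ≤ x) (hx1 : x ≤ 1) (hα : 0 ≤ α) :
    rpow₀ x α ^ 2 ≤ 1 := by
  unfold rpow₀
  split_ifs
  · norm_num
  · exact pow_le_one₀ (Real.rpow_nonneg hx0 α) (Real.rpow_le_one hx0 hx1 hα)

theorem Matrix.of_rpow₀_vecMulVec_self {n : Type*} {u : n → ℝ} (hu : ∀ i, 0 ≤ u i) (α : ℝ) :
    of (fun i j => rpow₀ (u i * u j) α) =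
      vecMulVec (fun i => rpow₀ (u i) α) (fun i => rpow₀ (u i) α) := by
  ext i j
  exact rpow₀_mul (hu i) (hu j) α

/-- For `α ≥ 0` and rank-one matrices `A = uuᵀ ≥ B = vvᵀ ≥ 0` with nonnegative `u, v`,
the entrywise `α`-th powers satisfy `A^{∘α} ≥ B^{∘α}` (with the convention `0^α := 0`). -/
theorem stmt3 (n : ℕ) (α : ℝ) (hα : 0 ≤ α) (u v : Fin n → ℝ)
    (hu : ∀ i, 0 ≤ u i) (hv : ∀ i, 0 ≤ v i)
    (h : (Matrix.vecMulVec u u - Matrix.vecMulVec v v).PosSemidef) :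
    (Matrix.of fun i j =>
      (if u i * u j = 0 then 0 else (u i * u j) ^ α) -
      (if v i * v j = 0 then 0 else (v i * v j) ^ α)).PosSemidef := by
  obtain ⟨c, hc, hvc⟩ := exists_eq_smul_of_posSemidef_vecMulVec_sub h
  set w := fun i => rpow₀ (u i) α
  set t := rpow₀ |c| α
  have hvw : (fun i => rpow₀ (v i) α) = t • w := by
    ext i
    rw [eq_abs_smul_of_eq_smul hu hv hvc]
    exact rpow₀_mul (abs_nonneg c) (hu i) α
  have hdiff : of (fun i j => rpow₀ (u i * u j) α - rpow₀ (v i * v j) α) =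
      (1 - t ^ 2) • vecMulVec w w := calc
    _ = vecMulVec w w - vecMulVec (t • w) (t • w) := by
      rw [← of_rpow₀_vecMulVec_self hu, ← hvw, ← of_rpow₀_vecMulVec_self hv]; rfl
    _ = (1 - t ^ 2) • vecMulVec w w := by
      rw [smul_vecMulVec, vecMulVec_smul, smul_smul, sub_smul, one_smul, sq]
  change (of fun i j => rpow₀ (u i * u j) α - rpow₀ (v i * v j) α).PosSemidef
  rw [hdiff]
  exact (posSemidef_vecMulVec_self_star w).smul
    (sub_nonneg.mpr (rpow₀_sq_le_one (abs_nonneg c) hc hα))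
end

section
/- For any α < 0, the entrywise power x^α applied to the 3×3 positive semidefinite matrix A with A_{11}=A_{22}=A_{33}=1, A_{12}=A_{21}=A_{23}=A_{32}=1/√2, A_{13}=A_{31}=0 yields a matrix that is not positive semidefinite; moreover A has rank 2. -/
/-!
`A4` is the path matrix `!![1, b, 0; b, 1, b; 0, b, 1]` at `b = 1/√2`. Since `2 b² = 1` it is
the Gram matrix `Cᵀ C` of the two rows of `C = !![1, b, 0; 0, b, 1]`, hence positive semidefinite
of rank 2. An entrywise power with `α < 0` maps it to the path matrix with `b = (1/√2)^α > 1`,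
whose quadratic form at `(b, -1, b)` equals `1 - 2 b² < 0`.
-/

open Matrix

noncomputable def A4 : Matrix (Fin 3) (Fin 3) ℝ :=
  !![1, 1 / Real.sqrt 2, 0;
     1 / Real.sqrt 2, 1, 1 / Real.sqrt 2;
     0, 1 / Real.sqrt 2, 1]

namespace PathMatrix

section ZeroOne

variable {R : Type*} [Zero R] [One R]

def pathMatrix (b : R) : Matrix (Fin 3) (Fin 3) R :=
  !![1, b, 0; b, 1, b; 0, b, 1]

def gramFactor (b : R) : Matrix (Fin 2) (Fin 3) R :=
  !![1, b, 0; 0, b, 1]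

theorem map_pathMatrix {S : Type*} [Zero S] [One S] (f : R → S) (h0 : f 0 = 0) (h1 : f 1 = 1)
    (b : R) : (pathMatrix b).map f = pathMatrix (f b) := by
  ext i j; fin_cases i <;> fin_cases j <;> simp [pathMatrix, h0, h1]

end ZeroOne

section CommRing

variable {R : Type*} [CommRing R]

theorem pathMatrix_eq_transpose_mul_gramFactor {b : R} (hb : 2 * b ^ 2 = 1) :
    pathMatrix b = (gramFactor b)ᵀ * gramFactor b := by
  ext i j
  fin_cases i <;> fin_cases j <;>
    simp [pathMatrix, gramFactor, mul_apply, Fin.sum_univ_two]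
  linear_combination -hb

theorem rank_gramFactor [Nontrivial R] (b : R) : (gramFactor b).rank = 2 := by
  let select : Matrix (Fin 3) (Fin 2) R := !![1, 0; 0, 0; 0, 1]
  have hselect : gramFactor b * select = 1 := by
    ext i j
    fin_cases i <;> fin_cases j <;> simp [select, gramFactor, mul_apply, Fin.sum_univ_three]
  refine le_antisymm ((rank_le_height _).trans_eq (Fintype.card_fin 2)) ?_
  calc 2 = (gramFactor b * select).rank := by rw [hselect, rank_one, Fintype.card_fin]
    _ ≤ (gramFactor b).rank := rank_mul_le_left _ _

theorem pathMatrix_dotProduct_mulVec (b : R) :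
    ![b, -1, b] ⬝ᵥ (pathMatrix b *ᵥ ![b, -1, b]) = 1 - 2 * b ^ 2 := by
  simp [pathMatrix, mulVec, dotProduct, Fin.sum_univ_three]
  ring

end CommRing

section Real

variable {b : ℝ}

theorem posSemidef_pathMatrix (hb : 2 * b ^ 2 = 1) : (pathMatrix b).PosSemidef := by
  rw [pathMatrix_eq_transpose_mul_gramFactor hb, ← conjTranspose_eq_transpose_of_trivial]
  exact posSemidef_conjTranspose_mul_self _

theorem rank_pathMatrix (hb : 2 * b ^ 2 = 1) : (pathMatrix b).rank = 2 := by
  rw [pathMatrix_eq_transpose_mul_gramFactor hb, ← conjTranspose_eq_transpose_of_trivial,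
    rank_conjTranspose_mul_self, rank_gramFactor]

theorem not_posSemidef_pathMatrix (hb : 1 < 2 * b ^ 2) : ¬ (pathMatrix b).PosSemidef :=
  fun h => by
    have := h.dotProduct_mulVec_nonneg ![b, -1, b]
    rw [star_trivial, pathMatrix_dotProduct_mulVec] at this
    linarith

end Real

end PathMatrix

open PathMatrix

theorem A4_eq_pathMatrix : A4 = pathMatrix (1 / Real.sqrt 2) := rfl

theorem two_mul_inv_sqrt_two_sq : 2 * (1 / Real.sqrt 2) ^ 2 = 1 := by
  rw [div_pow, Real.sq_sqrt zero_le_two]; norm_num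

/-- For `α < 0`, the entrywise power `x ↦ x^α` (with `0^α := 0`) applied to the
positive semidefinite rank-2 matrix `A4` is not positive semidefinite. -/
theorem stmt4 (α : ℝ) (hα : α < 0) :
    A4.PosSemidef ∧ ¬ (A4.map fun x => x ^ α).PosSemidef ∧ A4.rank = 2 := by
  have hpow : 1 < (1 / Real.sqrt 2) ^ α :=
    Real.one_lt_rpow_of_pos_of_lt_one_of_neg (by positivity)
      ((div_lt_one (by positivity)).2 Real.one_lt_sqrt_two) hα
  rw [A4_eq_pathMatrix,
    map_pathMatrix (fun x : ℝ => x ^ α) (Real.zero_rpow hα.ne) (Real.one_rpow α)]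
  exact ⟨posSemidef_pathMatrix two_mul_inv_sqrt_two_sq, not_posSemidef_pathMatrix (by nlinarith),
    rank_pathMatrix two_mul_inv_sqrt_two_sq⟩
end

section
/- Let α be a positive even integer and n = α+3. Define ψ_p(x) = sign(x)|x|^p and the n×n matrix A_n with entries cos((i−j)π/n). Then the vector (1,−1,1,…,1) is an eigenvector of the matrix ψ_p[A_n] = (ψ_p((A_n)_{ij})) with eigenvalue f(p) = 1 + 2 Σ_{j=1}^{α/2+1} (−1)^j cos(jπ/n)^p. -/
/-!
Put `g(k) = (-1)^k ψ_p(cos(kπ/n))` for `k ∈ ℤ`. Since `(-1)^j = (-1)^i (-1)^(i-j)`, the `i`-th entry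
of `ψ_p[A_n] v` is `(-1)^i ∑_j g(i - j)`. For odd `n`, `g` is even and `n`-periodic, so every row sum
equals `∑_{k<n} g(k) = g(0) + 2 ∑_{k=1}^{(n-1)/2} g(k)`, and on that range `cos(kπ/n) > 0`, so
`ψ_p` is the plain `p`-th power there.
-/

/-- The odd power function `ψ_p(x) = sign(x)|x|^p`. -/
noncomputable def psiPow (p x : ℝ) : ℝ := Real.sign x * |x| ^ p

open Finset Real

lemma psiPow_neg (p x : ℝ) : psiPow p (-x) = -psiPow p x := by
  simp only [psiPow, Real.sign_neg, abs_neg]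
  ring

lemma psiPow_of_pos (p : ℝ) {x : ℝ} (hx : 0 < x) : psiPow p x = x ^ p := by
  rw [psiPow, Real.sign_of_pos hx, abs_of_pos hx, one_mul]

lemma cos_mul_pi_div_pos {x n : ℝ} (hx : 0 ≤ x) (hxn : 2 * x < n) : 0 < cos (x * π / n) := by
  have hn : 0 < n := by linarith
  apply cos_pos_of_mem_Ioo
  constructor
  · have : 0 ≤ x * π / n := by positivity
    linarith [pi_pos]
  · rw [div_lt_div_iff₀ hn two_pos]
    nlinarith [pi_pos]

theorem Function.Periodic.sum_range_sub {M : Type*} [AddCommMonoid M] {g : ℤ → M} {n : ℕ}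
    (hg : Function.Periodic g n) (c : ℤ) :
    ∑ j ∈ range n, g (c - j) = ∑ k ∈ range n, g k := by
  set S : ℤ → M := fun c => ∑ j ∈ range n, g (c - j)
  -- `S (c + 1) - S c = g (c + 1) - g (c + 1 - n)`, which vanishes by periodicity.
  have hS : Function.Periodic S 1 := by
    intro c
    cases n with
    | zero => simp [S]
    | succ m =>
      show ∑ j ∈ range (m + 1), g (c + 1 - j) = ∑ j ∈ range (m + 1), g (c - j)
      rw [sum_range_succ', sum_range_succ]
      congr 1
      · refine sum_congr rfl fun j _ => ?_
        push_cast
        ring_nf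
      · rw [← hg (c - m)]
        push_cast
        ring_nf
  calc ∑ j ∈ range n, g (c - j) = S ((n - 1 : ℤ) + (c - (n - 1)) * 1) := by
        simp only [S]
        ring_nf
    _ = S (n - 1) := hS.int_mul _ _
    _ = ∑ j ∈ range n, g (n - 1 - j : ℕ) := by
        refine sum_congr rfl fun j hj => ?_
        have := mem_range.mp hj
        congr 1
        omega
    _ = ∑ k ∈ range n, g k := sum_range_reflect (fun k : ℕ => g k) n

theorem sum_range_of_periodic_of_even {M : Type*} [AddCommMonoid M] {g : ℤ → M} {n : ℕ}
    (hn : Odd n) (hper : Function.Periodic g n) (heven : ∀ k, g (-k) = g k) :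
    ∑ k ∈ range n, g k = g 0 + 2 • ∑ k ∈ Icc 1 (n / 2), g k := by
  obtain ⟨m, rfl⟩ := hn
  have hm : (2 * m + 1) / 2 = m := by omega
  -- `k ↦ n - k` matches the upper half `m < k < n` with the lower half `0 < k ≤ m`.
  have hupper : ∑ x ∈ range m, g ((m + x + 1 : ℕ) : ℤ) = ∑ x ∈ range m, g ((x + 1 : ℕ) : ℤ) := by
    rw [← sum_range_reflect]
    refine sum_congr rfl fun x hx => ?_
    have := mem_range.mp hx
    rw [← heven, ← hper]
    congr 1
    push_cast
    omega
  have hlower : ∑ x ∈ range m, g ((x + 1 : ℕ) : ℤ) = ∑ k ∈ Icc 1 m, g k := by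
    rw [range_eq_Ico, sum_Ico_add' (fun k : ℕ => g k), ← Ico_add_one_right_eq_Icc]
  rw [hm, sum_range_succ', two_mul, sum_range_add, hupper, hlower, two_nsmul, add_comm,
    Nat.cast_zero]

noncomputable def signedPsiCos (p : ℝ) (n : ℕ) (k : ℤ) : ℝ :=
  (-1) ^ k * psiPow p (cos (k * π / n))

section signedPsiCos

variable (p : ℝ) {n : ℕ}

lemma signedPsiCos_neg (k : ℤ) : signedPsiCos p n (-k) = signedPsiCos p n k := by
  simp [signedPsiCos, zpow_neg, ← inv_zpow, neg_mul, neg_div, cos_neg]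

-- Shifting `k` by an odd `n` flips both the sign `(-1)^k` and the cosine.
lemma signedPsiCos_periodic (hn : Odd n) : Function.Periodic (signedPsiCos p n) n := by
  intro k
  have hn0 : (n : ℝ) ≠ 0 := by exact_mod_cast hn.pos.ne'
  have harg : ((k + n : ℤ) : ℝ) * π / n = k * π / n + π := by
    push_cast
    field_simp
  rw [signedPsiCos, signedPsiCos, harg, cos_add_pi, psiPow_neg,
    zpow_add₀ (by norm_num), zpow_natCast, hn.neg_one_pow]
  ring

lemma signedPsiCos_zero : signedPsiCos p n 0 = 1 := by
  simp [signedPsiCos, psiPow_of_pos p one_pos]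

lemma signedPsiCos_of_two_mul_lt {k : ℕ} (hk : 2 * k < n) :
    signedPsiCos p n k = (-1) ^ k * cos (k * π / n) ^ p := by
  have hcos : 0 < cos (k * π / n) := cos_mul_pi_div_pos (Nat.cast_nonneg k) (by exact_mod_cast hk)
  rw [signedPsiCos, zpow_natCast, Int.cast_natCast, psiPow_of_pos p hcos]

lemma psiPow_cos_mul_neg_one_pow (i j : ℕ) :
    psiPow p (cos ((i - j : ℝ) * π / n)) * (-1) ^ j = (-1) ^ i * signedPsiCos p n (i - j) := by
  have hsign : (-1 : ℝ) ^ ((i : ℤ) - j) = (-1) ^ i * (-1) ^ j := by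
    rw [zpow_sub₀ (by norm_num), zpow_natCast, zpow_natCast, div_eq_mul_inv, ← inv_pow, inv_neg_one]
  have hsq : (-1 : ℝ) ^ i * (-1) ^ i = 1 := by rw [← mul_pow]; norm_num
  rw [signedPsiCos, hsign]
  push_cast
  linear_combination (psiPow p (cos ((i - j : ℝ) * π / n)) * (-1) ^ j) * hsq.symm

end signedPsiCos

theorem stmt6_general (a : ℕ) (ha : Even a) (p : ℝ) :
    (Matrix.of fun i j : Fin (a + 3) =>
        psiPow p (Real.cos ((((i : ℕ) : ℝ) - ((j : ℕ) : ℝ)) * Real.pi / ((a : ℝ) + 3)))).mulVec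
      (fun i => (-1 : ℝ) ^ (i : ℕ)) =
    (1 + 2 * ∑ j ∈ Finset.Icc 1 (a / 2 + 1),
        (-1 : ℝ) ^ j * Real.cos ((j : ℝ) * Real.pi / ((a : ℝ) + 3)) ^ p) •
      (fun i : Fin (a + 3) => (-1 : ℝ) ^ (i : ℕ)) := by
  have hodd : Odd (a + 3) := by obtain ⟨b, rfl⟩ := ha; exact ⟨b + 1, by ring⟩
  have hn : (a : ℝ) + 3 = ((a + 3 : ℕ) : ℝ) := by push_cast; ring
  have hhalf : (a + 3) / 2 = a / 2 + 1 := by obtain ⟨b, rfl⟩ := ha; omega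
  funext i
  simp only [Matrix.mulVec, dotProduct, Matrix.of_apply, Pi.smul_apply, smul_eq_mul, hn,
    psiPow_cos_mul_neg_one_pow, ← mul_sum]
  rw [Fin.sum_univ_eq_sum_range (fun j => signedPsiCos p (a + 3) ((i : ℕ) - j)),
    (signedPsiCos_periodic p hodd).sum_range_sub,
    sum_range_of_periodic_of_even hodd (signedPsiCos_periodic p hodd) (signedPsiCos_neg p),
    signedPsiCos_zero, hhalf, nsmul_eq_mul, Nat.cast_ofNat, mul_comm]
  congr 3
  refine sum_congr rfl fun k hk => ?_
  rw [signedPsiCos_of_two_mul_lt p (by rw [mem_Icc] at hk; omega)]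

/-- For a positive even integer `α` and `n = α + 3`, the vector `(1,-1,1,…,1)` is an
eigenvector of `ψ_p[A_n]` with eigenvalue `1 + 2∑_{j=1}^{α/2+1} (-1)^j cos(jπ/n)^p`. -/
theorem stmt6 (a : ℕ) (ha : Even a) (hpos : 0 < a) (p : ℝ) (hp : 0 < p) :
    (Matrix.of fun i j : Fin (a + 3) =>
        psiPow p (Real.cos ((((i : ℕ) : ℝ) - ((j : ℕ) : ℝ)) * Real.pi / ((a : ℝ) + 3)))).mulVec
      (fun i => (-1 : ℝ) ^ (i : ℕ)) =
    (1 + 2 * ∑ j ∈ Finset.Icc 1 (a / 2 + 1),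
        (-1 : ℝ) ^ j * Real.cos ((j : ℝ) * Real.pi / ((a : ℝ) + 3)) ^ p) •
      (fun i : Fin (a + 3) => (-1 : ℝ) ^ (i : ℕ)) :=
  stmt6_general a ha p
end

section
/- For any a > b > 0 and c ∈ (1/a, 1/b), setting v = (a, b, −c)ᵀ, B the 3×3 all-ones matrix, and A = B + vvᵀ, the matrix |A| − |B| obtained by applying x ↦ |x| entrywise to A and B has determinant −4b²(ac−1)² < 0; hence x ↦ |x| applied entrywise is not Loewner monotone on 3×3 positive semidefinite matrices of rank at most 2. -/
/-!
Both `A - B = vvᵀ` and `B = 𝟙𝟙ᵀ` are rank one. Since `ac > 1 > bc`, the only negative entries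
of `A` are the two corners `1 - ac`, so `|A| - |B|` is `vvᵀ` with those corners moved from `-ac`
to `ac - 2`; this perturbation of a rank-one matrix has determinant `-4b²(ac - 1)² < 0`.
-/

open Matrix

theorem Matrix.rank_add_le {m n K : Type*} [Fintype m] [Fintype n] [Field K]
    (A B : Matrix m n K) : (A + B).rank ≤ A.rank + B.rank := by
  rw [rank, rank, rank, mulVecLin_add]
  exact (Submodule.finrank_mono (LinearMap.range_add_le _ _)).trans
    (Submodule.finrank_add_le_finrank_add_finrank _ _)

theorem Matrix.of_const_one_eq_vecMulVec {m n R : Type*} [MulOneClass R] :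
    (of fun (_ : m) (_ : n) => (1 : R)) = vecMulVec 1 1 := by
  ext i j
  simp [vecMulVec]

section AbsOneAdd

variable {R : Type*} [CommRing R] [LinearOrder R] [IsOrderedRing R] {x : R}

theorem abs_one_add_sub_one_of_neg_one_le (hx : -1 ≤ x) : |1 + x| - 1 = x := by
  rw [abs_of_nonneg (neg_le_iff_add_nonneg'.mp hx)]
  ring

theorem abs_one_add_sub_one_of_le_neg_one (hx : x ≤ -1) : |1 + x| - 1 = -x - 2 := by
  rw [abs_of_nonpos (le_neg_iff_add_nonpos_left.mp hx)]
  ring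

end AbsOneAdd

theorem map_abs_sub_map_abs_of_one_add_vecMulVec {a b c : ℝ} (hab : 0 ≤ a * b)
    (hac : 1 ≤ a * c) (hbc : b * c ≤ 1) :
    ((of fun _ _ => 1) + vecMulVec ![a, b, -c] ![a, b, -c]).map (fun x => |x|) -
        (of fun (_ : Fin 3) (_ : Fin 3) => (1 : ℝ)).map (fun x => |x|) =
      !![a ^ 2, a * b, a * c - 2; a * b, b ^ 2, -(b * c); a * c - 2, -(b * c), c ^ 2] := by
  ext i j
  fin_cases i <;> fin_cases j <;> simp [vecMulVec] <;>
    first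
      | exact (abs_one_add_sub_one_of_neg_one_le (by nlinarith)).trans (by ring)
      | exact (abs_one_add_sub_one_of_le_neg_one (by nlinarith)).trans (by ring)

theorem det_vecMulVec_with_shifted_corners {R : Type*} [CommRing R] (a b c : R) :
    !![a ^ 2, a * b, a * c - 2; a * b, b ^ 2, -(b * c); a * c - 2, -(b * c), c ^ 2].det =
      -4 * b ^ 2 * (a * c - 1) ^ 2 := by
  simp [det_fin_three]
  ring

/-- For `a > b > 0`, `1/a < c < 1/b`, `v = (a,b,-c)ᵀ`, `B = 1_{3×3}`, `A = B + vvᵀ`: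
`det(|A| - |B|) = -4b²(ac-1)² < 0`, so `x ↦ |x|` is not Loewner monotone on
3×3 PSD matrices of rank at most 2. -/
theorem stmt8 (a b c : ℝ) (hb : 0 < b) (hba : b < a) (hc1 : 1 / a < c) (hc2 : c < 1 / b) :
    let v : Fin 3 → ℝ := ![a, b, -c]
    let B : Matrix (Fin 3) (Fin 3) ℝ := Matrix.of fun _ _ => 1
    let A := B + Matrix.vecMulVec v v
    (A - B).PosSemidef ∧ B.PosSemidef ∧ A.rank ≤ 2 ∧
    (A.map (fun x => |x|) - B.map fun x => |x|).det = -4 * b ^ 2 * (a * c - 1) ^ 2 ∧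
    ¬ (A.map (fun x => |x|) - B.map fun x => |x|).PosSemidef := by
  intro v B A
  have ha : 0 < a := hb.trans hba
  have hac : 1 < a * c := by linarith [(div_lt_iff₀ ha).1 hc1]
  have hbc : b * c < 1 := by linarith [(lt_div_iff₀ hb).1 hc2]
  have hB : B = vecMulVec 1 1 := of_const_one_eq_vecMulVec
  have hdet : (A.map (fun x => |x|) - B.map fun x => |x|).det = -4 * b ^ 2 * (a * c - 1) ^ 2 := by
    rw [map_abs_sub_map_abs_of_one_add_vecMulVec (mul_pos ha hb).le hac.le hbc.le,
      det_vecMulVec_with_shifted_corners]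
  refine ⟨?_, ?_, ?_, hdet, fun hpsd => ?_⟩
  · simpa [A] using posSemidef_vecMulVec_self_star v
  · simpa [hB] using posSemidef_vecMulVec_self_star (1 : Fin 3 → ℝ)
  · calc A.rank ≤ B.rank + (vecMulVec v v).rank := rank_add_le _ _
      _ ≤ 1 + 1 := add_le_add (hB ▸ rank_vecMulVec_le _ _) (rank_vecMulVec_le _ _)
  · have hpos : 0 < b ^ 2 * (a * c - 1) ^ 2 := by
      have := sub_pos.2 hac
      positivity
    linarith [hdet ▸ hpsd.det_nonneg]
end

section
/- Suppose f : (−R,R) → ℝ is differentiable and Loewner monotone on the set of n×n positive semidefinite matrices of rank at most k (2 ≤ k ≤ n) with entries in (−R,R). If A is an irreducible matrix in this set, then f'[A] (the entrywise application of f' to A) is positive semidefinite. -/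
/-!
Pick `c` such that every entry of `w := A c` is nonzero; such a `c` exists because irreducibility
makes every row of `A` nonzero, and a vector space over `ℝ` is not a finite union of proper
hyperplanes. Since `w` lies in the column space of `A`, the matrices `A + t wwᵀ` (`t > 0`) still
have rank at most `k` and dominate `A`, so `f[A + t wwᵀ] - f[A]` is positive semidefinite.
Differentiating at `t = 0⁺` shows that `f'[A] ∘ wwᵀ` is positive semidefinite, and a Schur product
with `w⁻¹(w⁻¹)ᵀ` recovers `f'[A]`.
-/

open scoped ENNReal NNReal ComplexOrder
open Filter Topology Matrix

theorem HasDerivAt.nonneg_of_eventually_le {g : ℝ → ℝ} {d a : ℝ} (hg : HasDerivAt g d a)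
    (h : ∀ᶠ t in 𝓝[>] 0, g a ≤ g (a + t)) : 0 ≤ d :=
  ge_of_tendsto hg.tendsto_slope_zero_right <| by
    filter_upwards [h, self_mem_nhdsWithin] with t ht ht0
    exact smul_nonneg (inv_nonneg.mpr (le_of_lt ht0)) (sub_nonneg.mpr ht)

namespace Matrix

variable {m n : Type*}

theorem row_ne_zero_of_irreducible [Nontrivial n] {R : Type*} [Zero R] {A : Matrix n n R}
    (hA : ∀ S : Set n, S.Nonempty → S ≠ Set.univ → ∃ i ∈ S, ∃ j ∈ Sᶜ, A i j ≠ 0) (i : n) :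
    A i ≠ 0 := by
  obtain ⟨i', rfl, j, -, hij⟩ := hA {i} (Set.singleton_nonempty i) (Set.singleton_ne_univ i)
  exact fun h => hij (congrFun h j)

theorem exists_forall_mulVec_ne_zero [Fintype n] [Finite m] {K : Type*} [Field K] [Infinite K]
    {A : Matrix m n K} (hA : ∀ i, A i ≠ 0) : ∃ c, ∀ i, (A *ᵥ c) i ≠ 0 := by
  by_contra! h
  obtain ⟨i, hi⟩ := Subspace.exists_eq_top_of_iUnion_eq_univ
    (p := fun i => LinearMap.ker ((LinearMap.proj i).comp A.mulVecLin))
    (Set.iUnion_eq_univ_iff.mpr fun c => by simpa using h c)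
  apply hA i
  classical
  ext j
  simpa [mulVec_single] using LinearMap.ext_iff.mp (LinearMap.ker_eq_top.mp hi) (Pi.single j 1)

theorem rank_add_vecMulVec_mulVec_le [Fintype n] [DecidableEq n] {R : Type*} [CommRing R]
    [StrongRankCondition R] (A : Matrix m n R) (c v : n → R) :
    (A + vecMulVec (A *ᵥ c) v).rank ≤ A.rank := by
  rw [← mul_vecMulVec]
  nth_rw 1 [← Matrix.mul_one A]
  rw [← Matrix.mul_add]
  exact rank_mul_le_left A (1 + vecMulVec c v)

theorem PosSemidef.of_hadamard_vecMulVec [Fintype n] {𝕜 : Type*} [RCLike 𝕜] {M : Matrix n n 𝕜}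
    {w : n → 𝕜} (hw : ∀ i, w i ≠ 0) (h : (M ⊙ vecMulVec w (star w)).PosSemidef) :
    M.PosSemidef := by
  convert h.hadamard (posSemidef_vecMulVec_self_star w⁻¹) using 1
  ext i j
  have := hw i
  have : star (w j) ≠ 0 := star_ne_zero.mpr (hw j)
  simp only [hadamard_apply, vecMulVec_apply, Pi.inv_apply, Pi.star_apply, star_inv₀]
  field_simp

theorem eventually_nnabs_add_smul_lt [Finite m] [Finite n] {R : ℝ≥0∞} {A : Matrix m n ℝ}
    (hA : ∀ i j, (Real.nnabs (A i j) : ℝ≥0∞) < R) (W : Matrix m n ℝ) :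
    ∀ᶠ t : ℝ in 𝓝 0, ∀ i j, (Real.nnabs ((A + t • W) i j) : ℝ≥0∞) < R := by
  have hopen : IsOpen {x : ℝ | (Real.nnabs x : ℝ≥0∞) < R} :=
    isOpen_lt (ENNReal.continuous_coe.comp continuous_nnnorm) continuous_const
  refine eventually_all.mpr fun i => eventually_all.mpr fun j => ?_
  have hline : Continuous fun t : ℝ => (A + t • W) i j := by fun_prop
  exact hline.continuousAt.preimage_mem_nhds (hopen.mem_nhds (by simpa using hA i j))

theorem hasDerivAt_dotProduct_map_add_smul_mulVec [Fintype m] [Fintype n] {f f' : ℝ → ℝ}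
    {A W : Matrix m n ℝ} (hf : ∀ i j, HasDerivAt f (f' (A i j)) (A i j)) (x : m → ℝ)
    (y : n → ℝ) :
    HasDerivAt (fun t : ℝ => x ⬝ᵥ ((A + t • W).map f *ᵥ y)) (x ⬝ᵥ ((A.map f' ⊙ W) *ᵥ y)) 0 := by
  simp only [dotProduct, mulVec, map_apply, add_apply, smul_apply, hadamard_apply, smul_eq_mul]
  refine HasDerivAt.fun_sum fun i _ => (HasDerivAt.fun_sum fun j _ => ?_).const_mul (x i)
  have hline : HasDerivAt (fun t : ℝ => A i j + t * W i j) (W i j) 0 := by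
    simpa using ((hasDerivAt_id (0 : ℝ)).mul_const (W i j)).const_add (A i j)
  have hf0 : HasDerivAt f (f' (A i j)) (A i j + 0 * W i j) := by simpa using hf i j
  exact (hf0.comp 0 hline).mul_const (y j)

theorem posSemidef_map_hadamard_of_hasDerivAt [Fintype n] {f f' : ℝ → ℝ} {A W : Matrix n n ℝ}
    (hA : A.IsHermitian) (hW : W.IsHermitian) (hf : ∀ i j, HasDerivAt f (f' (A i j)) (A i j))
    (hmono : ∀ᶠ t : ℝ in 𝓝[>] 0, ((A + t • W).map f - A.map f).PosSemidef) :
    (A.map f' ⊙ W).PosSemidef := by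
  refine .of_dotProduct_mulVec_nonneg ((hA.map f' fun _ => rfl).hadamard hW) fun x => ?_
  refine (hasDerivAt_dotProduct_map_add_smul_mulVec hf x x).nonneg_of_eventually_le ?_
  filter_upwards [hmono] with t ht
  simpa [sub_mulVec, dotProduct_sub] using ht.dotProduct_mulVec_nonneg x

end Matrix

theorem stmt9_general (R : ℝ≥0∞) (n k : ℕ) (hk : 2 ≤ k) (hkn : k ≤ n)
    (f f' : ℝ → ℝ)
    (hderiv : ∀ x : ℝ, (Real.nnabs x : ℝ≥0∞) < R → HasDerivAt f (f' x) x)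
    (hmono : ∀ A B : Matrix (Fin n) (Fin n) ℝ,
      (∀ i j, (Real.nnabs (A i j) : ℝ≥0∞) < R) →
      (∀ i j, (Real.nnabs (B i j) : ℝ≥0∞) < R) →
      A.rank ≤ k → B.rank ≤ k →
      B.PosSemidef → (A - B).PosSemidef →
      (A.map f - B.map f).PosSemidef)
    (A : Matrix (Fin n) (Fin n) ℝ) (hA : A.PosSemidef) (hrk : A.rank ≤ k)
    (hent : ∀ i j, (Real.nnabs (A i j) : ℝ≥0∞) < R)
    (hirr : ∀ S : Set (Fin n), S.Nonempty → S ≠ Set.univ →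
      ∃ i ∈ S, ∃ j ∈ Sᶜ, A i j ≠ 0) :
    (A.map f').PosSemidef := by
  have : Nontrivial (Fin n) := Fin.nontrivial_iff_two_le.mpr (hk.trans hkn)
  obtain ⟨c, hc⟩ := exists_forall_mulVec_ne_zero (row_ne_zero_of_irreducible hirr)
  set w := A *ᵥ c
  have hW : (vecMulVec w w).PosSemidef := posSemidef_vecMulVec_self_star w
  refine PosSemidef.of_hadamard_vecMulVec hc <|
    posSemidef_map_hadamard_of_hasDerivAt hA.isHermitian hW.isHermitian
      (fun i j => hderiv _ (hent i j)) ?_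
  filter_upwards [(eventually_nnabs_add_smul_lt hent (vecMulVec w w)).filter_mono nhdsWithin_le_nhds,
    self_mem_nhdsWithin] with t hent_t (ht : 0 < t)
  have hrk_t : (A + t • vecMulVec w w).rank ≤ k := by
    rw [← smul_vecMulVec, ← mulVec_smul]
    exact (rank_add_vecMulVec_mulVec_le A _ _).trans hrk
  exact hmono _ _ hent_t hent hrk_t hrk hA (by simpa using hW.smul ht.le)

/-- If `f : (-R,R) → ℝ` is differentiable and Loewner monotone on `n×n` PSD matrices of
rank at most `k` (`2 ≤ k ≤ n`) with entries in `(-R,R)`, and `A` is an irreducible matrix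
of this set, then `f'[A]` is positive semidefinite. -/
theorem stmt9 (R : ℝ≥0∞) (hR : 0 < R) (n k : ℕ) (hk : 2 ≤ k) (hkn : k ≤ n)
    (f f' : ℝ → ℝ)
    (hderiv : ∀ x : ℝ, (Real.nnabs x : ℝ≥0∞) < R → HasDerivAt f (f' x) x)
    (hmono : ∀ A B : Matrix (Fin n) (Fin n) ℝ,
      (∀ i j, (Real.nnabs (A i j) : ℝ≥0∞) < R) →
      (∀ i j, (Real.nnabs (B i j) : ℝ≥0∞) < R) →
      A.rank ≤ k → B.rank ≤ k →
      B.PosSemidef → (A - B).PosSemidef →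
      (A.map f - B.map f).PosSemidef)
    (A : Matrix (Fin n) (Fin n) ℝ) (hA : A.PosSemidef) (hrk : A.rank ≤ k)
    (hent : ∀ i j, (Real.nnabs (A i j) : ℝ≥0∞) < R)
    (hirr : ∀ S : Set (Fin n), S.Nonempty → S ≠ Set.univ →
      ∃ i ∈ S, ∃ j ∈ Sᶜ, A i j ≠ 0) :
    (A.map f').PosSemidef :=
  stmt9_general R n k hk hkn f f' hderiv hmono A hA hrk hent hirr
end

section
/- For any distinct real exponents α₁ < ⋯ < α_n and points 0 < x₁ < ⋯ < x_n, the (n+1)×(n+1) matrix whose first n rows are (x_j^{α_i})_{j=1}^{n} extended by a column of the values at 0 (which are 0), and last row all ones, is nonsingular; equivalently, the functions x^{α₁},…,x^{α_n} and the constant 1 are linearly independent on [0,R) for any R > 0. -/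
open scoped ENNReal NNReal

/-- The power function `x ↦ x^a` on `[0,∞)`, with the convention `0^a := 0`. -/
noncomputable def pow0 (a x : ℝ) : ℝ := if x = 0 then 0 else x ^ a

/-!
A combination `∑ cᵢ t^{βᵢ}` with `β₀ < ⋯ < β_{n-1}` that vanishes at `n` distinct positive points
is zero: dividing by `t^{β₀}` keeps the zeros, and by Rolle's theorem the derivative of
`∑ cᵢ t^{βᵢ - β₀}`, which has only the `n - 1` terms `cᵢ (βᵢ - β₀) t^{βᵢ - β₀ - 1}`, vanishes at
`n - 1` interlacing points, so induction on `n` applies. Since `0^α = 0`, evaluating at `0`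
isolates the constant term. The matrix is the evaluation matrix of `x^{α₁}, …, x^{α_n}, 1` at
`x₁, …, x_n, 0`, so a vector in its left kernel is such a vanishing combination; likewise a linear
relation on `[0,R)` can be evaluated at `0` and at `n` points of `(0,R)`.
-/

open Set

theorem exists_strictMono_deriv_zeros_between {n : ℕ} {f f' : ℝ → ℝ} {s : Set ℝ}
    [hs : s.OrdConnected] (hf : ∀ t ∈ s, HasDerivAt f (f' t) t) {x : Fin (n + 1) → ℝ}
    (hx : StrictMono x) (hxs : ∀ j, x j ∈ s) (hfx : ∀ j, f (x j) = 0) :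
    ∃ y : Fin n → ℝ, StrictMono y ∧ (∀ j, y j ∈ Ioo (x j.castSucc) (x j.succ)) ∧
      ∀ j, f' (y j) = 0 := by
  have hIcc (j : Fin n) : Icc (x j.castSucc) (x j.succ) ⊆ s := hs.out (hxs _) (hxs _)
  have hrolle (j : Fin n) : ∃ y ∈ Ioo (x j.castSucc) (x j.succ), f' y = 0 :=
    exists_hasDerivAt_eq_zero (hx (Fin.castSucc_lt_succ (i := j)))
      (fun t ht => (hf t (hIcc j ht)).continuousAt.continuousWithinAt) (by rw [hfx, hfx])
      (fun t ht => hf t (hIcc j (Ioo_subset_Icc_self ht)))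
  choose y hy hfy using hrolle
  refine ⟨y, fun j k hjk => ?_, hy, hfy⟩
  calc y j < x j.succ := (hy j).2
    _ ≤ x k.castSucc := hx.monotone (Fin.succ_le_castSucc_iff.2 hjk)
    _ < y k := (hy k).1

theorem hasDerivAt_sum_mul_rpow {ι : Type*} (s : Finset ι) (c γ : ι → ℝ) {t : ℝ} (ht : t ≠ 0) :
    HasDerivAt (fun u => ∑ i ∈ s, c i * u ^ γ i) (∑ i ∈ s, c i * (γ i * t ^ (γ i - 1))) t :=
  HasDerivAt.fun_sum fun i _ => (Real.hasDerivAt_rpow_const (Or.inl ht)).const_mul (c i)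

theorem sum_mul_rpow_eq_rpow_mul_sum {ι : Type*} (s : Finset ι) (c β : ι → ℝ) (γ : ℝ) {t : ℝ}
    (ht : 0 < t) : ∑ i ∈ s, c i * t ^ β i = t ^ γ * ∑ i ∈ s, c i * t ^ (β i - γ) := by
  rw [Finset.mul_sum]
  refine Finset.sum_congr rfl fun i _ => ?_
  rw [mul_left_comm, ← Real.rpow_add ht, add_sub_cancel]

theorem eq_zero_of_forall_sum_mul_rpow_eq_zero {n : ℕ} {β : Fin n → ℝ} (hβ : StrictMono β)
    {x : Fin n → ℝ} (hx : StrictMono x) (hxpos : ∀ j, 0 < x j) {c : Fin n → ℝ}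
    (hc : ∀ j, ∑ i, c i * x j ^ β i = 0) : c = 0 := by
  induction n with
  | zero => exact funext finZeroElim
  | succ n ih =>
    set g : ℝ → ℝ := fun t => ∑ i, c i * t ^ (β i - β 0)
    have hgx (j : Fin (n + 1)) : g (x j) = 0 := by
      have h := hc j
      rw [sum_mul_rpow_eq_rpow_mul_sum _ _ _ (β 0) (hxpos j)] at h
      exact (mul_eq_zero.1 h).resolve_left (Real.rpow_pos_of_pos (hxpos j) _).ne'
    obtain ⟨y, hy, hyx, hgy⟩ := exists_strictMono_deriv_zeros_between (s := Ioi 0)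
      (fun t ht => hasDerivAt_sum_mul_rpow _ c (fun i => β i - β 0) (ne_of_gt ht)) hx hxpos hgx
    have hβsucc (i : Fin n) : 0 < β i.succ - β 0 := sub_pos.2 (hβ (Fin.succ_pos i))
    have htail : (fun i : Fin n => c i.succ * (β i.succ - β 0)) = 0 := by
      refine ih (β := fun i => β i.succ - β 0 - 1) (fun i k hik => ?_) hy
        (fun j => (hxpos _).trans (hyx j).1) fun j => ?_
      · simpa using hβ (Fin.succ_lt_succ_iff.2 hik)
      · have h := hgy j
        simp only [Fin.sum_univ_succ, sub_self, zero_mul, mul_zero, zero_add] at h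
        rw [← h]
        exact Finset.sum_congr rfl fun i _ => by ring
    have hcsucc (i : Fin n) : c i.succ = 0 :=
      (mul_eq_zero.1 (congrFun htail i)).resolve_right (hβsucc i).ne'
    have hc0 : c 0 = 0 := by
      have h := hc 0
      simp only [Fin.sum_univ_succ, hcsucc, zero_mul, Finset.sum_const_zero, add_zero] at h
      exact (mul_eq_zero.1 h).resolve_right (Real.rpow_pos_of_pos (hxpos 0) _).ne'
    funext i
    cases i using Fin.cases with
    | zero => exact hc0
    | succ i => exact hcsucc i

theorem pow0_zero (a : ℝ) : pow0 a 0 = 0 := if_pos rfl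

theorem pow0_of_ne_zero (a : ℝ) {t : ℝ} (ht : t ≠ 0) : pow0 a t = t ^ a := if_neg ht

theorem eq_zero_of_forall_sum_mul_pow0_add_eq_zero {n : ℕ} {α : Fin n → ℝ} (hα : StrictMono α)
    {x : Fin n → ℝ} (hx : StrictMono x) (hxpos : ∀ j, 0 < x j) {c : Fin n → ℝ} {d : ℝ}
    (h : ∀ t ∈ insert 0 (range x), ∑ i, c i * pow0 (α i) t + d = 0) : c = 0 ∧ d = 0 := by
  have hd : d = 0 := by simpa [pow0_zero] using h 0 (mem_insert _ _)
  refine ⟨eq_zero_of_forall_sum_mul_rpow_eq_zero hα hx hxpos fun j => ?_, hd⟩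
  simpa [hd, pow0_of_ne_zero _ (hxpos j).ne'] using h (x j) (mem_insert_of_mem _ ⟨j, rfl⟩)

theorem det_ne_zero_of_forall_sum_mul_apply_eq_zero {ι : Type*} [Fintype ι] [DecidableEq ι] {f : ι → ℝ → ℝ} {p : ι → ℝ}
    (h : ∀ v : ι → ℝ, (∀ j, ∑ i, v i * f i (p j) = 0) → v = 0) :
    (Matrix.of fun i j => f i (p j)).det ≠ 0 := by
  rw [Ne, ← Matrix.exists_vecMul_eq_zero_iff]
  rintro ⟨v, hv, hvM⟩
  exact hv (h v fun j => by simpa [Matrix.vecMul, dotProduct] using congrFun hvM j)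

theorem Set.Infinite.exists_strictMono_fin {α : Type*} [LinearOrder α] {s : Set α}
    (hs : s.Infinite) (n : ℕ) : ∃ x : Fin n → α, StrictMono x ∧ ∀ j, x j ∈ s := by
  obtain ⟨t, hts, hcard⟩ := hs.exists_subset_card_eq n
  exact ⟨t.orderEmbOfFin hcard, (t.orderEmbOfFin hcard).strictMono,
    fun j => hts (t.orderEmbOfFin_mem hcard j)⟩

theorem det_pow0_matrix_ne_zero {n : ℕ} {α : Fin n → ℝ} (hα : StrictMono α) {x : Fin n → ℝ}
    (hx : StrictMono x) (hxpos : ∀ j, 0 < x j) :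
    (Matrix.of fun i j : Fin (n + 1) =>
      if hi : (i : ℕ) < n then
        (if hj : (j : ℕ) < n then pow0 (α ⟨i, hi⟩) (x ⟨j, hj⟩) else 0)
      else 1).det ≠ 0 := by
  set p : Fin (n + 1) → ℝ := Fin.snoc x 0
  have hM : (Matrix.of fun i j : Fin (n + 1) =>
      if hi : (i : ℕ) < n then
        (if hj : (j : ℕ) < n then pow0 (α ⟨i, hi⟩) (x ⟨j, hj⟩) else 0)
      else 1) = Matrix.of fun i j =>
        Fin.snoc (α := fun _ => ℝ → ℝ) (fun k => pow0 (α k)) (fun _ => 1) i (p j) := by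
    ext i j
    cases i using Fin.lastCases <;> cases j using Fin.lastCases <;> simp [p, pow0_zero]
  rw [hM]
  refine det_ne_zero_of_forall_sum_mul_apply_eq_zero fun v hv => ?_
  have hsum (j : Fin (n + 1)) :
      ∑ i, v i.castSucc * pow0 (α i) (p j) + v (Fin.last n) = 0 := by
    simpa [Fin.sum_univ_castSucc] using hv j
  obtain ⟨hc, hd⟩ := eq_zero_of_forall_sum_mul_pow0_add_eq_zero hα hx hxpos
    (c := fun i => v i.castSucc) (d := v (Fin.last n)) (by
      rintro t (rfl | ⟨j, rfl⟩)
      · simpa [p] using hsum (Fin.last n)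
      · simpa [p] using hsum j.castSucc)
  funext i
  cases i using Fin.lastCases with
  | last => exact hd
  | cast i => exact congrFun hc i

theorem linearIndependent_pow0_sumElim_one {n : ℕ} {α : Fin n → ℝ} (hα : StrictMono α)
    {S : Set ℝ} (h0 : 0 ∈ S) (hS : (S ∩ Ioi 0).Infinite) :
    LinearIndependent ℝ
      (Sum.elim (fun i (t : S) => pow0 (α i) t) (fun (_ : Unit) (_ : S) => (1 : ℝ))) := by
  obtain ⟨x, hx, hxS⟩ := hS.exists_strictMono_fin n
  have hmem {t : ℝ} (ht : t ∈ insert 0 (range x)) : t ∈ S := by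
    rcases ht with rfl | ⟨j, rfl⟩
    exacts [h0, (hxS j).1]
  rw [Fintype.linearIndependent_iff]
  intro g hg
  obtain ⟨hc, hd⟩ := eq_zero_of_forall_sum_mul_pow0_add_eq_zero hα hx (fun j => (hxS j).2)
    (c := fun i => g (Sum.inl i)) (d := g (Sum.inr ())) fun t ht => by
      simpa [Fintype.sum_sum_type] using congrFun hg ⟨t, hmem ht⟩
  rintro (i | ⟨⟩)
  · exact congrFun hc i
  · exact hd

/-- Generalized Vandermonde nonsingularity: for `α₁ < ⋯ < α_n` and `0 < x₁ < ⋯ < x_n`,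
the `(n+1)×(n+1)` matrix with rows `(x_j^{α_i})` extended by the column of values at `0`
(which are `0`) and a last row of ones, is nonsingular; equivalently the functions
`x^{α_i}` together with the constant `1` are linearly independent on `[0,R)`. -/
theorem stmt15 (n : ℕ) (α : Fin n → ℝ) (hα : StrictMono α) :
    (∀ x : Fin n → ℝ, StrictMono x → (∀ j, 0 < x j) →
      (Matrix.of fun i j : Fin (n + 1) =>
        if hi : (i : ℕ) < n then
          (if hj : (j : ℕ) < n then pow0 (α ⟨i, hi⟩) (x ⟨j, hj⟩) else 0)
        else 1).det ≠ 0) ∧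
    (∀ R : ℝ≥0∞, 0 < R →
      LinearIndependent ℝ
        (Sum.elim
          (fun i (t : {t : ℝ // 0 ≤ t ∧ (Real.nnabs t : ℝ≥0∞) < R}) => pow0 (α i) t.1)
          (fun (_ : Unit) (_ : {t : ℝ // 0 ≤ t ∧ (Real.nnabs t : ℝ≥0∞) < R}) =>
            (1 : ℝ)))) := by
  refine ⟨fun x hx hxpos => det_pow0_matrix_ne_zero hα hx hxpos, fun R hR => ?_⟩
  obtain ⟨r, -, hr, hrR⟩ := ENNReal.lt_iff_exists_real_btwn.1 hR
  have hIoo : Ioo 0 r ⊆ {t : ℝ | 0 ≤ t ∧ (Real.nnabs t : ℝ≥0∞) < R} ∩ Ioi 0 := fun t ht =>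
    ⟨⟨ht.1.le, by
      rw [Real.nnabs_of_nonneg ht.1.le]
      exact (ENNReal.ofReal_le_ofReal ht.2.le).trans_lt hrR⟩, ht.1⟩
  exact linearIndependent_pow0_sumElim_one hα (S := {t | 0 ≤ t ∧ (Real.nnabs t : ℝ≥0∞) < R})
    ⟨le_rfl, by simpa using hR⟩ ((Ioo_infinite (ENNReal.ofReal_pos.1 hr)).mono hIoo)
end

section
/- For α ≥ n and positive semidefinite n×n matrices A, B with nonnegative entries, the entrywise power is super-additive: (A+B)^{∘α} ≥ A^{∘α} + B^{∘α} in the Loewner order. -/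
/-!
Along the segment `t ↦ Y + t • (X - Y)` the entrywise power `· ^ γ` has derivative
`γ • (X - Y) ⊙ (Y + t • (X - Y)) ^ (γ - 1)`, so by Schur's product theorem positivity of the
entrywise powers with exponent `γ - 1` along the segment gives `Y ^ γ ≤ X ^ γ`.
Induction on the size `m` then gives the FitzGerald–Horn theorem (`A ^ γ` is positive semidefinite
for `γ ≥ m - 2`): `A` minus the rank-one matrix through its last column is positive semidefinite
and vanishes in the last row and column, so only an `m × m` block of it enters the Hadamard
product. Consequently `· ^ β` is monotone for `β ≥ m - 1`, and super-additivity follows because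
`t ↦ (B + t • A) ^ α - (t • A) ^ α` has derivative
`α • A ⊙ ((B + t • A) ^ (α - 1) - (t • A) ^ (α - 1))`.
-/

open Set

namespace Matrix

variable {ι : Type*}

theorem PosSemidef.of_isEmpty [IsEmpty ι] (M : Matrix ι ι ℝ) : M.PosSemidef :=
  Subsingleton.elim 0 M ▸ PosSemidef.zero

theorem posSemidef_fin_one_of_nonneg {M : Matrix (Fin 1) (Fin 1) ℝ} (h : 0 ≤ M 0 0) :
    M.PosSemidef := by
  have hM : M = diagonal fun _ => M 0 0 := by
    ext i j
    fin_cases i; fin_cases j; rfl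
  exact hM ▸ PosSemidef.diagonal fun _ => h

theorem posSemidef_fin_two_of_sq_le {M : Matrix (Fin 2) (Fin 2) ℝ} (hM : M.IsHermitian)
    (h₀ : 0 ≤ M 0 0) (h₁ : 0 ≤ M 1 1) (hdet : M 0 1 ^ 2 ≤ M 0 0 * M 1 1) :
    M.PosSemidef := by
  refine .of_dotProduct_mulVec_nonneg hM fun x => ?_
  have hsymm : M 1 0 = M 0 1 := by simpa using hM.apply 0 1
  simp only [star_trivial, dotProduct, mulVec, Fin.sum_univ_two, hsymm]
  rcases h₀.eq_or_lt with hz | hpos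
  · have h01 : M 0 1 = 0 := by nlinarith
    rw [h01, ← hz]
    nlinarith [mul_nonneg h₁ (mul_self_nonneg (x 1))]
  · -- `M 0 0 · xᵀMx = (M 0 0 x₀ + M 0 1 x₁)² + det M · x₁²`
    refine nonneg_of_mul_nonneg_right ?_ hpos
    nlinarith [sq_nonneg (M 0 0 * x 0 + M 0 1 * x 1),
      mul_nonneg (sub_nonneg.2 hdet) (sq_nonneg (x 1))]

/-- For positive semidefinite `A`, `vecMulVec (A.scaledCol l) (A.scaledCol l)` agrees with `A` in
row and column `l`; when `A l l = 0` both vanish (`x / 0 = 0`). -/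
noncomputable def scaledCol (A : Matrix ι ι ℝ) (l : ι) : ι → ℝ := fun i => A i l / √(A l l)

theorem add_smul_sub_apply_nonneg {X Y : Matrix ι ι ℝ} (hX : ∀ i j, 0 ≤ X i j)
    (hY : ∀ i j, 0 ≤ Y i j) {t : ℝ} (ht : t ∈ Icc (0 : ℝ) 1) (i j : ι) :
    0 ≤ (Y + t • (X - Y)) i j := by
  have : (Y + t • (X - Y)) i j = (1 - t) * Y i j + t * X i j := by simp; ring
  rw [this]
  exact add_nonneg (mul_nonneg (by linarith [ht.2]) (hY i j)) (mul_nonneg ht.1 (hX i j))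

theorem hasDerivAt_map_rpow_add_smul {γ : ℝ} (hγ : 1 ≤ γ) (Y D : Matrix ι ι ℝ) (t : ℝ) (i j : ι) :
    HasDerivAt (fun s => (Y + s • D).map (· ^ γ) i j)
      ((γ • (D ⊙ (Y + t • D).map (· ^ (γ - 1)))) i j) t := by
  have hline : HasDerivAt (fun s => Y i j + s * D i j) (D i j) t :=
    (hasDerivAt_mul_const _).const_add _
  convert hline.rpow_const (Or.inr hγ) using 1
  · simp
  · simp only [smul_apply, hadamard_apply, map_apply, add_apply, smul_eq_mul]
    ring

variable [Fintype ι]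

theorem PosSemidef.sq_dotProduct_col_le {A : Matrix ι ι ℝ} (hA : A.PosSemidef)
    (x : ι → ℝ) (l : ι) : (x ⬝ᵥ A.col l) ^ 2 ≤ (x ⬝ᵥ A *ᵥ x) * A l l := by
  classical
  have hs : ∀ y, 0 ≤ toBilin' A y y := fun y => by
    simpa [toBilin'_apply'] using hA.dotProduct_mulVec_nonneg y
  have hsymm : LinearMap.IsSymm (toBilin' A) :=
    LinearMap.BilinForm.isSymm_iff.1 (isSymm_toBilin'_iff_isSymm.2 (by simpa using hA.isHermitian))
  simpa [toBilin'_apply', mulVec_single_one] using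
    (toBilin' A).apply_sq_le_of_symm hs hsymm x (Pi.single l 1)

theorem PosSemidef.sq_apply_le {A : Matrix ι ι ℝ} (hA : A.PosSemidef) (i j : ι) :
    A i j ^ 2 ≤ A i i * A j j := by
  classical
  simpa [col] using hA.sq_dotProduct_col_le (Pi.single i 1) j

theorem PosSemidef.apply_eq_zero_of_diag_eq_zero {A : Matrix ι ι ℝ} (hA : A.PosSemidef) {l : ι}
    (hl : A l l = 0) (i : ι) : A i l = 0 := by
  have := hA.sq_apply_le i l
  rw [hl, mul_zero] at this
  exact pow_eq_zero_iff two_ne_zero |>.mp (le_antisymm this (sq_nonneg _))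

theorem PosSemidef.sub_vecMulVec_scaledCol {A : Matrix ι ι ℝ} (hA : A.PosSemidef) (l : ι) :
    (A - vecMulVec (A.scaledCol l) (A.scaledCol l)).PosSemidef := by
  classical
  have hrank := posSemidef_vecMulVec_self_star (A.scaledCol l)
  rw [star_trivial] at hrank
  refine .of_dotProduct_mulVec_nonneg (hA.isHermitian.sub hrank.isHermitian) fun x => ?_
  have hx : (x ⬝ᵥ A.scaledCol l) ^ 2 = (x ⬝ᵥ A.col l) ^ 2 / A l l := by
    have : x ⬝ᵥ A.scaledCol l = (x ⬝ᵥ A.col l) / √(A l l) := by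
      simp only [scaledCol, dotProduct, col_apply, Finset.sum_div, mul_div_assoc]
    rw [this, div_pow, Real.sq_sqrt hA.diag_nonneg]
  rw [star_trivial, sub_mulVec, dotProduct_sub, vecMulVec_mulVec, sub_nonneg]
  simp only [MulOpposite.smul_eq_mul_unop, MulOpposite.unop_op, dotProduct_smul,
    dotProduct_comm _ x, ← sq, hx]
  exact div_le_of_le_mul₀ hA.diag_nonneg (hA.dotProduct_mulVec_nonneg x) (by
    simpa using hA.sq_dotProduct_col_le x l)

theorem PosSemidef.sub_vecMulVec_scaledCol_apply_col {A : Matrix ι ι ℝ} (hA : A.PosSemidef)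
    (l i : ι) : (A - vecMulVec (A.scaledCol l) (A.scaledCol l)) i l = 0 := by
  refine (hA.sub_vecMulVec_scaledCol l).apply_eq_zero_of_diag_eq_zero ?_ i
  simp only [sub_apply, vecMulVec_apply, scaledCol, Real.div_sqrt,
    Real.mul_self_sqrt hA.diag_nonneg, sub_self]

theorem PosSemidef.of_submatrix_castSucc {m : ℕ} {M : Matrix (Fin (m + 1)) (Fin (m + 1)) ℝ}
    (hM : M.IsHermitian) (hlast : ∀ i, M i (Fin.last m) = 0)
    (hsub : (M.submatrix Fin.castSucc Fin.castSucc).PosSemidef) : M.PosSemidef := by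
  refine .of_dotProduct_mulVec_nonneg hM fun x => ?_
  have hlast' : ∀ j, M (Fin.last m) j = 0 := fun j => by
    simpa [hlast] using (hM.apply (Fin.last m) j).symm
  simpa [dotProduct, mulVec, Fin.sum_univ_castSucc, hlast, hlast'] using
    hsub.dotProduct_mulVec_nonneg (x ∘ Fin.castSucc)

theorem posSemidef_sub_of_hasDerivAt {P P' : ℝ → Matrix ι ι ℝ} (hP : ∀ t, (P t).IsHermitian)
    (hderiv : ∀ t i j, HasDerivAt (fun s => P s i j) (P' t i j) t)
    (hP' : ∀ t ∈ Ioo (0 : ℝ) 1, (P' t).PosSemidef) : (P 1 - P 0).PosSemidef := by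
  refine .of_dotProduct_mulVec_nonneg ((hP 1).sub (hP 0)) fun x => ?_
  have hq : ∀ t, HasDerivAt (fun s => x ⬝ᵥ P s *ᵥ x) (x ⬝ᵥ P' t *ᵥ x) t := fun t => by
    simp only [dotProduct, mulVec]
    exact HasDerivAt.fun_sum fun i _ =>
      (HasDerivAt.fun_sum fun j _ => (hderiv t i j).mul_const (x j)).const_mul (x i)
  have hmono : MonotoneOn (fun s => x ⬝ᵥ P s *ᵥ x) (Icc 0 1) :=
    monotoneOn_of_hasDerivWithinAt_nonneg (convex_Icc 0 1)
      (fun t _ => (hq t).continuousAt.continuousWithinAt) (fun t _ => (hq t).hasDerivWithinAt)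
      (fun t ht => by
        rw [interior_Icc] at ht
        simpa using (hP' t ht).dotProduct_mulVec_nonneg x)
  rw [star_trivial, sub_mulVec, dotProduct_sub, sub_nonneg]
  exact hmono (left_mem_Icc.2 zero_le_one) (right_mem_Icc.2 zero_le_one) zero_le_one

theorem posSemidef_map_rpow_sub_of_hadamard {γ : ℝ} (hγ : 1 ≤ γ) {X Y : Matrix ι ι ℝ}
    (hX : X.IsHermitian) (hY : Y.IsHermitian)
    (h : ∀ t ∈ Ioo (0 : ℝ) 1, ((X - Y) ⊙ (Y + t • (X - Y)).map (· ^ (γ - 1))).PosSemidef) :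
    (X.map (· ^ γ) - Y.map (· ^ γ)).PosSemidef := by
  have hpath : ∀ t : ℝ, (Y + t • (X - Y)).IsHermitian := fun t =>
    hY.add ((hX.sub hY).smul (IsSelfAdjoint.all t))
  simpa using posSemidef_sub_of_hasDerivAt
    (fun t => (hpath t).map _ fun _ => by simp) (hasDerivAt_map_rpow_add_smul hγ Y (X - Y))
    fun t ht => (h t ht).smul (by linarith : (0 : ℝ) ≤ γ)

theorem PosSemidef.map_rpow_succ {m : ℕ} {γ : ℝ} (hγ : 1 ≤ γ)
    (ih : ∀ C : Matrix (Fin m) (Fin m) ℝ, C.PosSemidef → (∀ i j, 0 ≤ C i j) →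
      (C.map (· ^ (γ - 1))).PosSemidef)
    {A : Matrix (Fin (m + 1)) (Fin (m + 1)) ℝ} (hA : A.PosSemidef) (hAe : ∀ i j, 0 ≤ A i j) :
    (A.map (· ^ γ)).PosSemidef := by
  set ξ := A.scaledCol (Fin.last m)
  have hξ : ∀ i, 0 ≤ ξ i := fun i => div_nonneg (hAe i _) (Real.sqrt_nonneg _)
  have hB : (vecMulVec ξ ξ).PosSemidef := by simpa using posSemidef_vecMulVec_self_star ξ
  have hAB : (A - vecMulVec ξ ξ).PosSemidef := hA.sub_vecMulVec_scaledCol _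
  have hBγ : ((vecMulVec ξ ξ).map (· ^ γ)).PosSemidef := by
    have : (vecMulVec ξ ξ).map (· ^ γ) = vecMulVec (fun i => ξ i ^ γ) (fun i => ξ i ^ γ) := by
      ext i j
      simp [vecMulVec_apply, Real.mul_rpow (hξ i) (hξ j)]
    rw [this]
    simpa using posSemidef_vecMulVec_self_star fun i => ξ i ^ γ
  have hAγ : (A.map (· ^ γ) - (vecMulVec ξ ξ).map (· ^ γ)).PosSemidef := by
    refine posSemidef_map_rpow_sub_of_hadamard hγ hA.isHermitian hB.isHermitian fun t ht => ?_
    set C := vecMulVec ξ ξ + t • (A - vecMulVec ξ ξ)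
    have hC : C.PosSemidef := hB.add (hAB.smul ht.1.le)
    have hCe : ∀ i j, 0 ≤ C i j := add_smul_sub_apply_nonneg hAe
      (fun i j => mul_nonneg (hξ i) (hξ j)) (Ioo_subset_Icc_self ht)
    refine .of_submatrix_castSucc (hAB.isHermitian.hadamard (hC.isHermitian.map _ fun _ => by simp))
      (fun i => by simp [hadamard_apply, ξ, hA.sub_vecMulVec_scaledCol_apply_col]) ?_
    rw [submatrix_hadamard, submatrix_map]
    exact (hAB.submatrix _).hadamard (ih _ (hC.submatrix _) fun i j => hCe _ _)
  simpa using hBγ.add hAγ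

theorem PosSemidef.map_rpow {m : ℕ} {A : Matrix (Fin m) (Fin m) ℝ} (hA : A.PosSemidef)
    (hAe : ∀ i j, 0 ≤ A i j) {γ : ℝ} (hγ : 0 ≤ γ) (hγm : (m : ℝ) - 2 ≤ γ) :
    (A.map (· ^ γ)).PosSemidef := by
  induction m generalizing γ with
  | zero => exact .of_isEmpty _
  | succ m ih =>
    push_cast at hγm
    rcases le_or_gt 1 γ with hγ1 | hγ1
    · exact hA.map_rpow_succ hγ1 (fun C hC hCe => ih hC hCe (by linarith) (by linarith)) hAe
    · have hm : m < 2 := by exact_mod_cast (by linarith : (m : ℝ) < 2)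
      interval_cases m
      · exact posSemidef_fin_one_of_nonneg (Real.rpow_nonneg (hAe 0 0) γ)
      · refine posSemidef_fin_two_of_sq_le (hA.isHermitian.map _ fun _ => by simp)
          (Real.rpow_nonneg (hAe 0 0) γ) (Real.rpow_nonneg (hAe 1 1) γ) ?_
        calc (A 0 1 ^ γ) ^ 2 = (A 0 1 ^ 2) ^ γ := Real.rpow_pow_comm (hAe 0 1) γ 2
          _ ≤ (A 0 0 * A 1 1) ^ γ := Real.rpow_le_rpow (sq_nonneg _) (hA.sq_apply_le 0 1) hγ
          _ = A 0 0 ^ γ * A 1 1 ^ γ := Real.mul_rpow (hAe 0 0) (hAe 1 1)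

theorem PosSemidef.map_rpow_sub_map_rpow {m : ℕ} {X Y : Matrix (Fin m) (Fin m) ℝ}
    (hY : Y.PosSemidef) (hXY : (X - Y).PosSemidef) (hXe : ∀ i j, 0 ≤ X i j)
    (hYe : ∀ i j, 0 ≤ Y i j) {β : ℝ} (hβ : 0 ≤ β) (hβm : (m : ℝ) - 1 ≤ β) :
    (X.map (· ^ β) - Y.map (· ^ β)).PosSemidef := by
  rcases le_or_gt 1 β with hβ1 | hβ1
  · have hX : X.PosSemidef := by simpa using hXY.add hY
    refine posSemidef_map_rpow_sub_of_hadamard hβ1 hX.isHermitian hY.isHermitian fun t ht => ?_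
    exact hXY.hadamard <| (hY.add (hXY.smul ht.1.le)).map_rpow
      (add_smul_sub_apply_nonneg hXe hYe (Ioo_subset_Icc_self ht)) (by linarith) (by linarith)
  · have hm : m < 2 := by exact_mod_cast (by linarith : (m : ℝ) < 2)
    interval_cases m
    · exact .of_isEmpty _
    · refine posSemidef_fin_one_of_nonneg (sub_nonneg.2 (Real.rpow_le_rpow (hYe 0 0) ?_ hβ))
      simpa using hXY.diag_nonneg (i := 0)

theorem PosSemidef.map_rpow_add_sub {n : ℕ} {A B : Matrix (Fin n) (Fin n) ℝ}
    (hA : A.PosSemidef) (hB : B.PosSemidef) (hAe : ∀ i j, 0 ≤ A i j) (hBe : ∀ i j, 0 ≤ B i j)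
    {α : ℝ} (hα : 1 ≤ α) (hαn : (n : ℝ) ≤ α) :
    ((A + B).map (· ^ α) - A.map (· ^ α) - B.map (· ^ α)).PosSemidef := by
  have hsmul : ∀ t : ℝ, (t • A).IsHermitian := fun t => hA.isHermitian.smul (IsSelfAdjoint.all t)
  -- monotonicity of `· ^ (α - 1)` applies because `(B + t • A) - t • A = B`
  have hmono : ∀ t ∈ Ioo (0 : ℝ) 1,
      ((B + t • A).map (· ^ (α - 1)) - (t • A).map (· ^ (α - 1))).PosSemidef := fun t ht =>
    (hA.smul ht.1.le).map_rpow_sub_map_rpow (by simpa using hB)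
      (fun i j => by simpa using add_nonneg (hBe i j) (mul_nonneg ht.1.le (hAe i j)))
      (fun i j => by simpa using mul_nonneg ht.1.le (hAe i j)) (by linarith) (by linarith)
  have hP := posSemidef_sub_of_hasDerivAt
    (P := fun t => (B + t • A).map (· ^ α) - (t • A).map (· ^ α))
    (fun t => ((hB.isHermitian.add (hsmul t)).map _ fun _ => by simp).sub
      ((hsmul t).map _ fun _ => by simp))
    (fun t i j => by
      have h₀ := hasDerivAt_map_rpow_add_smul hα 0 A t i j
      simp only [zero_add] at h₀
      exact ((hasDerivAt_map_rpow_add_smul hα B A t i j).fun_sub h₀).congr_deriv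
        (by simp [hadamard_apply, mul_sub]))
    fun t ht => ((hA.hadamard (hmono t ht)).smul (by linarith : (0 : ℝ) ≤ α))
  convert hP using 1
  ext i j
  simp [add_comm B A, Real.zero_rpow (by linarith : α ≠ 0)]

end Matrix

theorem pow0_eq_rpow {a : ℝ} (ha : a ≠ 0) : pow0 a = (· ^ a) := by
  funext x
  by_cases hx : x = 0 <;> simp [pow0, hx, Real.zero_rpow ha]

/-- For `α ≥ n` and PSD `n×n` matrices `A, B` with nonnegative entries, the entrywise
power is super-additive: `(A+B)^{∘α} ≥ A^{∘α} + B^{∘α}`. -/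
theorem stmt17 (n : ℕ) (α : ℝ) (hα : (n : ℝ) ≤ α)
    (A B : Matrix (Fin n) (Fin n) ℝ) (hA : A.PosSemidef) (hB : B.PosSemidef)
    (hAe : ∀ i j, 0 ≤ A i j) (hBe : ∀ i j, 0 ≤ B i j) :
    ((A + B).map (pow0 α) - A.map (pow0 α) - B.map (pow0 α)).PosSemidef := by
  rcases Nat.eq_zero_or_pos n with rfl | hn
  · exact .of_isEmpty _
  have hα₁ : (1 : ℝ) ≤ α := le_trans (by exact_mod_cast hn) hα
  rw [pow0_eq_rpow (by linarith)]
  exact hA.map_rpow_add_sub hB hAe hBe hα₁ hα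
end

section
/- The function f₀ (f₀(x) = 1 for x > 0, f₀(0) = 0) applied entrywise is Loewner sub-additive on rank-one n×n positive semidefinite matrices with nonnegative entries: for A, B rank-one PSD with nonnegative entries, f₀[A] + f₀[B] − f₀[A+B] = 1_{S(A)∩S(B)}, which is positive semidefinite, where S(M) = {i : M_{ii} ≠ 0} and 1_S is the 0/1 matrix with (i,j) entry 1 iff i,j ∈ S. -/
/-- `f₀` (`f₀(x) = 1` for `x ≠ 0`, `f₀(0) = 0`) is Loewner sub-additive on rank-one PSD
matrices with nonnegative entries: the deficit equals the indicator matrix of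
`S(A) ∩ S(B)`, which is PSD. -/
theorem stmt18 (n : ℕ) (w z : Fin n → ℝ) (hw : ∀ i, 0 ≤ w i) (hz : ∀ i, 0 ≤ z i) :
    let f0 : ℝ → ℝ := fun x => if x = 0 then 0 else 1
    let A := Matrix.vecMulVec w w
    let B := Matrix.vecMulVec z z
    (A.map f0 + B.map f0 - (A + B).map f0 =
      Matrix.of fun i j =>
        if A i i ≠ 0 ∧ B i i ≠ 0 ∧ A j j ≠ 0 ∧ B j j ≠ 0 then 1 else 0) ∧
    (A.map f0 + B.map f0 - (A + B).map f0).PosSemidef := by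
  intro f0 A B
  set v : Fin n → ℝ := fun i => if w i ≠ 0 ∧ z i ≠ 0 then 1 else 0 with hv
  have key : A.map f0 + B.map f0 - (A + B).map f0 = Matrix.vecMulVec v v := by
    ext i j
    have hAij : A i j = w i * w j := rfl
    have hBij : B i j = z i * z j := rfl
    simp only [Matrix.sub_apply, Matrix.add_apply, Matrix.map_apply, Matrix.vecMulVec_apply,
      hAij, hBij, hv, f0]
    have h1 : w i * w j + z i * z j = 0 ↔ w i * w j = 0 ∧ z i * z j = 0 := by
      constructor
      · intro h
        have h2 : 0 ≤ w i * w j := mul_nonneg (hw i) (hw j)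
        have h3 : 0 ≤ z i * z j := mul_nonneg (hz i) (hz j)
        constructor <;> linarith
      · rintro ⟨h1, h2⟩; rw [h1, h2]; ring
    by_cases hwi : w i = 0 <;> by_cases hwj : w j = 0 <;>
      by_cases hzi : z i = 0 <;> by_cases hzj : z j = 0 <;>
      simp [hwi, hwj, hzi, hzj, h1, mul_eq_zero]
  constructor
  · rw [key]
    ext i j
    have hAi : A i i = w i * w i := rfl
    have hBi : B i i = z i * z i := rfl
    have hAj : A j j = w j * w j := rfl
    have hBj : B j j = z j * z j := rfl
    simp only [Matrix.vecMulVec_apply, Matrix.of_apply, hAi, hBi, hAj, hBj, hv, mul_eq_zero,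
      ne_eq, or_self]
    by_cases hwi : w i = 0 <;> by_cases hwj : w j = 0 <;>
      by_cases hzi : z i = 0 <;> by_cases hzj : z j = 0 <;>
      simp [hwi, hwj, hzi, hzj]
  · rw [key, Matrix.vecMulVec_eq (Fin 1)]
    have h : Matrix.replicateCol (Fin 1) v = Matrix.conjTranspose (Matrix.replicateRow (Fin 1) v) := by
      ext i j; simp [Matrix.replicateCol, Matrix.replicateRow]
    rw [h]
    exact Matrix.posSemidef_conjTranspose_mul_self _
end

section
/- For every α < 0, the function g(x,y) = log(e^{αx} + e^{αy} − (e^x + e^y)^α) is convex on ℝ²; consequently x ↦ x^α (with 0^α := 0) is Loewner sub-additive on 2×2 rank-one positive semidefinite matrices with nonnegative entries. -/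
/-!
With `G(u, v) = u^α + v^α - (u + v)^α`, homogeneity `G(cu, cv) = c^α G(u, v)` gives
`g(x, y) = α y + φ(x - y)` with `φ(s) = log G(e^s, 1)`, so it suffices that `φ` is convex, i.e.
`h'^2 ≤ h h''` for `h = G(e^s, 1)`. After substituting `t = e^s / (e^s + 1)` this is a polynomial
inequality whose gap is `-α` times a sum of visibly nonnegative terms.

The entries of `f_α[A] + f_α[B] - f_α[A + B]` are `G(a², c²)`, `G(ab, cd)`, `G(b², d²)`, and
midpoint convexity of `g` between `(log a², log c²)` and `(log b², log d²)` is exactly the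
determinant condition `G(ab, cd)² ≤ G(a², c²) G(b², d²)`.
-/

open Real Set Matrix

/-- With Mathlib's `0 ^ α = 0` for `α ≠ 0`, this agrees with the convention `0^α := 0`. -/
noncomputable def rpowGap (α u v : ℝ) : ℝ := u ^ α + v ^ α - (u + v) ^ α

section rpowGap

variable {α u v : ℝ}

theorem rpowGap_pos (hα : α < 0) (hu : 0 < u) (hv : 0 < v) : 0 < rpowGap α u v := by
  have := rpow_lt_rpow_of_neg hu (lt_add_of_pos_right u hv) hα
  have := rpow_pos_of_pos hv α
  unfold rpowGap
  linarith

theorem rpowGap_zero_left (hα : α ≠ 0) (v : ℝ) : rpowGap α 0 v = 0 := by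
  simp [rpowGap, zero_rpow hα]

theorem rpowGap_comm (α u v : ℝ) : rpowGap α u v = rpowGap α v u := by
  simp only [rpowGap, add_comm]

theorem rpowGap_zero_right (hα : α ≠ 0) (u : ℝ) : rpowGap α u 0 = 0 := by
  rw [rpowGap_comm, rpowGap_zero_left hα]

theorem rpowGap_nonneg (hα : α < 0) (hu : 0 ≤ u) (hv : 0 ≤ v) : 0 ≤ rpowGap α u v := by
  obtain rfl | hu := hu.eq_or_lt
  · exact (rpowGap_zero_left hα.ne v).ge
  obtain rfl | hv := hv.eq_or_lt
  · exact (rpowGap_zero_right hα.ne u).ge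
  exact (rpowGap_pos hα hu hv).le

theorem rpowGap_mul_mul {c : ℝ} (hc : 0 ≤ c) (hu : 0 ≤ u) (hv : 0 ≤ v) :
    rpowGap α (c * u) (c * v) = c ^ α * rpowGap α u v := by
  simp only [rpowGap, ← mul_add, mul_rpow hc hu, mul_rpow hc hv, mul_rpow hc (add_nonneg hu hv)]
  ring

end rpowGap

theorem convexOn_univ_log_of_sq_deriv_le {h h' h'' : ℝ → ℝ} (hpos : ∀ x, 0 < h x)
    (hh : ∀ x, HasDerivAt h (h' x) x) (hh' : ∀ x, HasDerivAt h' (h'' x) x)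
    (hsq : ∀ x, h' x ^ 2 ≤ h x * h'' x) :
    ConvexOn ℝ univ fun x => log (h x) := by
  have hlog x : HasDerivAt (fun x => log (h x)) (h' x / h x) x := (hh x).log (hpos x).ne'
  have hquot x : HasDerivAt (fun x => h' x / h x) ((h'' x * h x - h' x * h' x) / h x ^ 2) x :=
    (hh' x).div (hh x) (hpos x).ne'
  refine convexOn_of_hasDerivWithinAt2_nonneg convex_univ
    (fun x _ => (hlog x).continuousAt.continuousWithinAt)
    (fun x _ => (hlog x).hasDerivWithinAt) (fun x _ => (hquot x).hasDerivWithinAt)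
    fun x _ => div_nonneg ?_ (sq_nonneg _)
  nlinarith [hsq x]

/-- `h' ^ 2 ≤ h * h''` for `h s = e^{α s} + 1 - (e^s + 1)^α`, written in terms of
`X = e^{α s}`, `P = (e^s + 1)^α` and `t = e^s / (e^s + 1)`. -/
theorem sq_le_mul_of_rpowGap_exp_one {α t X P : ℝ} (hα : α ≤ 0) (ht₀ : 0 ≤ t) (ht₁ : t ≤ 1)
    (hP₀ : 0 ≤ P) (hP₁ : P ≤ 1) (hPX : P ≤ X) :
    (α * (X - t * P)) ^ 2 ≤ (X + 1 - P) * (α ^ 2 * X - α * t * P - α * (α - 1) * t ^ 2 * P) := by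
  have : 0 ≤ X := hP₀.trans hPX
  have : 0 ≤ -α := by linarith
  have : 0 ≤ 1 - 2 * α := by linarith
  have : 0 ≤ 1 - P := by linarith
  have : 0 ≤ X - P := by linarith
  have : 0 ≤ 1 - t := by linarith
  have : 0 ≤ 1 - t ^ 2 := by nlinarith
  rw [← sub_nonneg]
  calc (0 : ℝ) ≤ -α * (-α * X * (1 - P) * (1 - t ^ 2) + (1 - 2 * α) * X * P * t * (1 - t)
        + -α * t ^ 2 * (X - P) + P * t * (1 - t) * (1 - P)) := by positivity
    _ = _ := by ring

theorem convexOn_log_rpowGap_exp_one {α : ℝ} (hα : α < 0) :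
    ConvexOn ℝ univ fun s => log (rpowGap α (exp s) 1) := by
  set t : ℝ → ℝ := fun s => exp s / (exp s + 1)
  set P : ℝ → ℝ := fun s => (exp s + 1) ^ α
  have hE s : 0 < exp s + 1 := by positivity
  have ht s : HasDerivAt t (t s * (1 - t s)) s := by
    refine ((hasDerivAt_exp s).div ((hasDerivAt_exp s).add_const 1) (hE s).ne').congr_deriv ?_
    simp only [t]
    field_simp
  have hP s : HasDerivAt P (α * t s * P s) s := by
    refine (((hasDerivAt_exp s).add_const 1).rpow_const (p := α) (Or.inl (hE s).ne')).congr_deriv ?_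
    simp only [t, P, rpow_sub_one (hE s).ne']
    ring
  have hX s : HasDerivAt (fun s => exp (α * s)) (α * exp (α * s)) s := by
    simpa [mul_comm] using ((hasDerivAt_id s).const_mul α).exp
  have hgap s : rpowGap α (exp s) 1 = exp (α * s) + 1 - P s := by
    simp [rpowGap, P, ← exp_mul, mul_comm]
  simp_rw [hgap]
  refine convexOn_univ_log_of_sq_deriv_le (h' := fun s => α * (exp (α * s) - t s * P s))
    (fun s => ?_) (fun s => (((hX s).add_const 1).sub (hP s)).congr_deriv (by ring))
    (fun s => ((hX s).sub ((ht s).mul (hP s))).const_mul α) (fun s => ?_)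
  · rw [← hgap]
    exact rpowGap_pos hα (exp_pos s) one_pos
  · have ht₁ : t s ≤ 1 := (div_le_one (hE s)).2 (by linarith)
    have hP₁ : P s ≤ 1 := rpow_le_one_of_one_le_of_nonpos (by linarith [exp_pos s]) hα.le
    have hPX : P s ≤ exp (α * s) := by
      rw [mul_comm, exp_mul]
      exact rpow_le_rpow_of_nonpos (exp_pos s) (by linarith) hα.le
    calc _ ≤ _ := sq_le_mul_of_rpowGap_exp_one hα.le (by positivity) ht₁ (by positivity) hP₁ hPX
      _ = _ := by ring

theorem convexOn_log_rpowGap_exp {α : ℝ} (hα : α < 0) :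
    ConvexOn ℝ univ fun p : ℝ × ℝ => log (rpowGap α (exp p.1) (exp p.2)) := by
  have hsplit (p : ℝ × ℝ) : log (rpowGap α (exp p.1) (exp p.2)) =
      α * p.2 + log (rpowGap α (exp (p.1 - p.2)) 1) := by
    have hx : exp p.1 = exp p.2 * exp (p.1 - p.2) := by rw [← exp_add]; ring_nf
    rw [hx, ← mul_one (exp p.2), mul_assoc, one_mul, rpowGap_mul_mul (exp_pos _).le
      (exp_pos _).le zero_le_one, log_mul (by positivity) (rpowGap_pos hα (exp_pos _) one_pos).ne',
      ← exp_mul, log_exp, mul_comm]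
  simp_rw [hsplit]
  have hlin : ConvexOn ℝ univ fun p : ℝ × ℝ => α * p.2 :=
    (α • LinearMap.snd ℝ ℝ ℝ).convexOn convex_univ
  have hdiff : ConvexOn ℝ univ fun p : ℝ × ℝ => log (rpowGap α (exp (p.1 - p.2)) 1) := by
    simpa [Function.comp_def] using
      (convexOn_log_rpowGap_exp_one hα).comp_linearMap (LinearMap.fst ℝ ℝ ℝ - LinearMap.snd ℝ ℝ ℝ)
  exact hlin.add hdiff

theorem rpowGap_mul_sq_le_of_pos {α a b c d : ℝ} (hα : α < 0) (ha : 0 < a) (hb : 0 < b)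
    (hc : 0 < c) (hd : 0 < d) :
    rpowGap α (a * b) (c * d) ^ 2 ≤ rpowGap α (a * a) (c * c) * rpowGap α (b * b) (d * d) := by
  have hlog {x y : ℝ} (hx : 0 < x) (hy : 0 < y) :
      log (rpowGap α (exp (log x)) (exp (log y))) = log (rpowGap α x y) := by
    rw [exp_log hx, exp_log hy]
  have hmid : (1 / 2 : ℝ) • (log (a * a), log (c * c)) + (1 / 2 : ℝ) • (log (b * b), log (d * d))
      = (log (a * b), log (c * d)) := by
    simp only [log_mul ha.ne' ha.ne', log_mul hb.ne' hb.ne', log_mul hc.ne' hc.ne',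
      log_mul hd.ne' hd.ne', log_mul ha.ne' hb.ne', log_mul hc.ne' hd.ne', Prod.smul_mk,
      Prod.mk_add_mk, smul_eq_mul, Prod.mk.injEq]
    constructor <;> ring
  have hconv := (convexOn_log_rpowGap_exp hα).2 (mem_univ (log (a * a), log (c * c)))
    (mem_univ (log (b * b), log (d * d))) (by norm_num : (0 : ℝ) ≤ 1 / 2)
    (by norm_num : (0 : ℝ) ≤ 1 / 2) (by norm_num)
  simp only [hmid, hlog (mul_pos ha hb) (mul_pos hc hd), hlog (mul_pos ha ha) (mul_pos hc hc),
    hlog (mul_pos hb hb) (mul_pos hd hd), smul_eq_mul] at hconv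
  have hr := rpowGap_pos hα (mul_pos ha hb) (mul_pos hc hd)
  have hp := rpowGap_pos hα (mul_pos ha ha) (mul_pos hc hc)
  have hq := rpowGap_pos hα (mul_pos hb hb) (mul_pos hd hd)
  rw [← log_le_log_iff (by positivity) (by positivity), log_pow, log_mul hp.ne' hq.ne']
  push_cast
  linarith

theorem rpowGap_mul_sq_le {α a b c d : ℝ} (hα : α < 0) (ha : 0 ≤ a) (hb : 0 ≤ b)
    (hc : 0 ≤ c) (hd : 0 ≤ d) :
    rpowGap α (a * b) (c * d) ^ 2 ≤ rpowGap α (a * a) (c * c) * rpowGap α (b * b) (d * d) := by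
  obtain rfl | ha := ha.eq_or_lt
  · simp [rpowGap_zero_left hα.ne]
  obtain rfl | hb := hb.eq_or_lt
  · simp [rpowGap_zero_left hα.ne]
  obtain rfl | hc := hc.eq_or_lt
  · simp [rpowGap_zero_right hα.ne]
  obtain rfl | hd := hd.eq_or_lt
  · simp [rpowGap_zero_right hα.ne]
  exact rpowGap_mul_sq_le_of_pos hα ha hb hc hd

theorem posSemidef_of_sq_le_mul {p q r : ℝ} (hp : 0 ≤ p) (hq : 0 ≤ q) (hr : r ^ 2 ≤ p * q) :
    (!![p, r; r, q]).PosSemidef := by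
  refine PosSemidef.of_dotProduct_mulVec_nonneg ?_ fun x => ?_
  · ext i j
    fin_cases i <;> fin_cases j <;> rfl
  simp only [star_trivial, dotProduct, mulVec, Fin.sum_univ_two, of_apply, cons_val', cons_val_zero,
    cons_val_one, empty_val', cons_val_fin_one]
  obtain rfl | hp := hp.eq_or_lt
  · obtain rfl : r = 0 := by nlinarith
    nlinarith [mul_nonneg hq (mul_self_nonneg (x 1))]
  · nlinarith [sq_nonneg (p * x 0 + r * x 1), mul_nonneg (sub_nonneg.2 hr) (sq_nonneg (x 1))]

/-- For `α < 0`, `g(x,y) = log(e^{αx} + e^{αy} - (e^x + e^y)^α)` is convex on `ℝ²`;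
consequently `x ↦ x^α` (with `0^α := 0`) is Loewner sub-additive on `2×2` rank-one PSD
matrices with nonnegative entries. -/
theorem stmt19 (α : ℝ) (hα : α < 0) :
    ConvexOn ℝ Set.univ (fun p : ℝ × ℝ =>
      Real.log (Real.exp (α * p.1) + Real.exp (α * p.2) -
        (Real.exp p.1 + Real.exp p.2) ^ α)) ∧
    ∀ a b c d : ℝ, 0 ≤ a → 0 ≤ b → 0 ≤ c → 0 ≤ d →
      let A := Matrix.vecMulVec ![a, b] ![a, b]
      let B := Matrix.vecMulVec ![c, d] ![c, d]
      (A.map (fun x => x ^ α) + B.map (fun x => x ^ α) -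
        (A + B).map fun x => x ^ α).PosSemidef := by
  refine ⟨?_, ?_⟩
  · simpa only [rpowGap, ← exp_mul, mul_comm _ α] using convexOn_log_rpowGap_exp hα
  intro a b c d ha hb hc hd A B
  have hM : A.map (fun x => x ^ α) + B.map (fun x => x ^ α) - (A + B).map (fun x => x ^ α) =
      !![rpowGap α (a * a) (c * c), rpowGap α (a * b) (c * d);
        rpowGap α (a * b) (c * d), rpowGap α (b * b) (d * d)] := by
    ext i j
    fin_cases i <;> fin_cases j <;> simp [A, B, rpowGap, mul_comm b a, mul_comm d c]
  rw [hM]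
  exact posSemidef_of_sq_le_mul (rpowGap_nonneg hα (by positivity) (by positivity))
    (rpowGap_nonneg hα (by positivity) (by positivity)) (rpowGap_mul_sq_le hα ha hb hc hd)
end
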